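/- Let D be a strongly connected tournament, a a vertex, x ∈ a⁺ and y ∈ a⁻ with line(a,x) = line(y,a). Then there is at most one pair (x',y') with x' ∈ a⁺ ∩ y⁻ and y' ∈ a⁻ such that line(a,x') = line(y',a); namely only (x,y). Equivalently, |{line(a,z) : z ∈ a⁺} ∩ {line(z,a) : z ∈ a⁻ ∩ x⁺}| ≤ 1 and |{line(z,a) : z ∈ a⁻} ∩ {line(a,z) : z ∈ a⁺ ∩ y⁻}| ≤ 1. -/
import Mathlib


open scoped Classical

/-- `stepsTo A n u v` : there is a directed walk of length `n` from `u` to `v`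
in the digraph with arc relation `A`. -/
def stepsTo {V : Type*} (A : V → V → Prop) : ℕ → V → V → Prop
  | 0, u, v => u = v
  | n+1, u, v => ∃ w, A u w ∧ stepsTo A n w v

/-- A digraph is strongly connected if every vertex is reachable from every vertex. -/
def StronglyConnected {V : Type*} (A : V → V → Prop) : Prop :=
  ∀ u v : V, ∃ n : ℕ, stepsTo A n u v

/-- The directed distance: the length of a shortest directed path from `u` to `v`. -/
noncomputable def ddist {V : Type*} (A : V → V → Prop) (u v : V) : ℕ :=
  sInf {n : ℕ | stepsTo A n u v}

/-- `btw A u v z` means `z ∈ [u,v]`, i.e. `z` lies on a shortest dipath from `u` to `v`. -/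
def btw {V : Type*} (A : V → V → Prop) (u v z : V) : Prop :=
  ddist A u v = ddist A u z + ddist A z v

/-- The line generated by the ordered pair `(u,v)`:
`{z : u ∈ [z,v] or v ∈ [u,z] or z ∈ [u,v]}`. -/
def line {V : Type*} (A : V → V → Prop) (u v : V) : Set V :=
  {z | btw A z v u ∨ btw A u z v ∨ btw A u v z}

/-- `L(D)`: the set of all lines generated by ordered pairs of distinct vertices. -/
def lineSet {V : Type*} (A : V → V → Prop) : Set (Set V) :=
  {S | ∃ u v : V, u ≠ v ∧ S = line A u v}

section Aux

variable {V : Type*} {A : V → V → Prop}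

lemma btw_iff' {u v z : V} : btw A u v z ↔ ddist A u v = ddist A u z + ddist A z v :=
  Iff.rfl

lemma mem_line_iff {u v z : V} :
    z ∈ line A u v ↔ btw A z v u ∨ btw A u z v ∨ btw A u v z := Iff.rfl

lemma stepsTo_add {m n : ℕ} {u v w : V} (h1 : stepsTo A m u v) (h2 : stepsTo A n v w) :
    stepsTo A (m + n) u w := by
  induction m generalizing u with
  | zero =>
    have h0 : u = v := h1
    subst h0
    rw [Nat.zero_add]
    exact h2
  | succ m ih =>
    obtain ⟨t, hut, htv⟩ := h1
    have : m + 1 + n = (m + n) + 1 := by omega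
    rw [this]
    exact ⟨t, hut, ih htv⟩

variable (hsc : StronglyConnected A)
include hsc

lemma ddist_spec (u v : V) : stepsTo A (ddist A u v) u v :=
  Nat.sInf_mem (hsc u v)

omit hsc in
lemma ddist_le {n : ℕ} {u v : V} (h : stepsTo A n u v) : ddist A u v ≤ n :=
  Nat.sInf_le h

omit hsc in
lemma ddist_self (u : V) : ddist A u u = 0 :=
  Nat.le_antisymm (ddist_le (show stepsTo A 0 u u from rfl)) (Nat.zero_le _)

lemma eq_of_ddist_eq_zero {u v : V} (h : ddist A u v = 0) : u = v := by
  have := ddist_spec hsc u v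
  rw [h] at this
  exact this

lemma ddist_triangle (u v w : V) : ddist A u w ≤ ddist A u v + ddist A v w :=
  ddist_le (stepsTo_add (ddist_spec hsc u v) (ddist_spec hsc v w))

lemma arc_of_ddist_eq_one {u v : V} (h : ddist A u v = 1) : A u v := by
  have := ddist_spec hsc u v
  rw [h] at this
  obtain ⟨w, hw, hw0⟩ := this
  have hwv : w = v := hw0
  exact hwv ▸ hw

lemma ddist_pos {u v : V} (h : u ≠ v) : 1 ≤ ddist A u v := by
  rcases Nat.eq_zero_or_pos (ddist A u v) with h0 | h0
  · exact absurd (eq_of_ddist_eq_zero hsc h0) h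
  · exact h0

lemma ddist_of_arc {u v : V} (h : A u v) (hne : u ≠ v) : ddist A u v = 1 :=
  Nat.le_antisymm (ddist_le ⟨v, h, rfl⟩) (ddist_pos hsc hne)

lemma ddist_eq_two {u v w : V} (h : ¬ A u v) (hne : u ≠ v) (h1 : A u w) (h2 : A w v) :
    ddist A u v = 2 := by
  refine Nat.le_antisymm (ddist_le ⟨w, h1, v, h2, rfl⟩) ?_
  rcases Nat.lt_or_ge (ddist A u v) 2 with hlt | hge
  · interval_cases hd : (ddist A u v)
    · exact absurd (eq_of_ddist_eq_zero hsc hd) hne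
    · exact absurd (arc_of_ddist_eq_one hsc hd) h
  · exact hge

lemma ddist_succ {u v : V} {n : ℕ} (h : ddist A u v = n + 1) :
    ∃ t, A u t ∧ ddist A t v = n := by
  have hs := ddist_spec hsc u v
  rw [h] at hs
  obtain ⟨t, hut, htv⟩ := hs
  refine ⟨t, hut, Nat.le_antisymm (ddist_le htv) ?_⟩
  by_contra hlt
  push_neg at hlt
  have : ddist A u v ≤ 1 + ddist A t v :=
    ddist_le (stepsTo_add ⟨t, hut, rfl⟩ (ddist_spec hsc t v))
  omega

end Aux

section Main

variable {V : Type*} {A : V → V → Prop}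
variable (hanti : ∀ u v : V, ¬ (A u v ∧ A v u))
variable (hcomp : ∀ u v : V, u ≠ v → A u v ∨ A v u)
variable (hsc : StronglyConnected A)
include hanti hcomp hsc

omit hcomp hsc in
lemma arc_ne {u v : V} (h : A u v) : u ≠ v := by
  rintro rfl; exact hanti u u ⟨h, h⟩

/-- Key lemma: if `line(a,u) = line(v,a)` with `u ∈ a⁺`, `v ∈ a⁻`, then `A u v`. -/
lemma key {a u v : V} (hau : A a u) (hva : A v a) (heq : line A a u = line A v a) :
    A u v := by
  by_contra huv
  have hua : u ≠ a := (arc_ne hanti hau).symm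
  have hvne : v ≠ a := arc_ne hanti hva
  have huvne : u ≠ v := by rintro rfl; exact hanti a u ⟨hau, hva⟩
  have hvu : A v u := (hcomp v u (Ne.symm huvne)).resolve_right (by tauto)
  have dau : ddist A a u = 1 := ddist_of_arc hsc hau hua.symm
  have dva : ddist A v a = 1 := ddist_of_arc hsc hva hvne
  have dvu : ddist A v u = 1 := ddist_of_arc hsc hvu huvne.symm
  -- v ∈ line A v a, hence in line A a u
  have hvmem : v ∈ line A a u := by
    rw [heq, mem_line_iff]
    refine Or.inr (Or.inr ?_)
    rw [btw_iff', ddist_self]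
    omega
  rw [mem_line_iff] at hvmem
  have dav : ddist A a v = 1 + ddist A u v := by
    rcases hvmem with h | h | h
    · rw [btw_iff'] at h; omega
    · rw [btw_iff'] at h; omega
    · rw [btw_iff'] at h
      have h0 : ddist A a v = 0 := by omega
      exact absurd (eq_of_ddist_eq_zero hsc h0) fun he => hvne he.symm
  -- u ∈ line A a u, hence in line A v a
  have humem : u ∈ line A v a := by
    rw [← heq, mem_line_iff]
    refine Or.inr (Or.inr ?_)
    rw [btw_iff', ddist_self]
    omega
  rw [mem_line_iff] at humem
  have dua : ddist A u a = ddist A u v + 1 := by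
    rcases humem with h | h | h
    · rw [btw_iff'] at h; omega
    · rw [btw_iff'] at h; omega
    · rw [btw_iff'] at h
      have h0 : ddist A u a = 0 := by omega
      exact absurd (eq_of_ddist_eq_zero hsc h0) hua
  have hk2 : 2 ≤ ddist A u v := by
    have h1 := ddist_pos hsc huvne
    rcases Nat.lt_or_ge (ddist A u v) 2 with hlt | hge
    · have hd1 : ddist A u v = 1 := by omega
      exact absurd (arc_of_ddist_eq_one hsc hd1) huv
    · exact hge
  -- take the first step t on a shortest path u ⇝ v
  obtain ⟨k, hkeq⟩ : ∃ k, ddist A u v = k + 1 := ⟨ddist A u v - 1, by omega⟩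
  obtain ⟨t, hut, htv⟩ := ddist_succ hsc hkeq
  have htu : t ≠ u := (arc_ne hanti hut).symm
  have dut : ddist A u t = 1 := ddist_of_arc hsc hut (Ne.symm htu)
  have dta : ddist A t a = k + 1 := by
    have htr1 := ddist_triangle hsc u t a
    have htr2 := ddist_triangle hsc t v a
    omega
  have hta : t ≠ a := by
    rintro rfl
    rw [ddist_self] at dta; omega
  have hat : A a t := by
    refine (hcomp a t (Ne.symm hta)).resolve_right fun h => ?_
    have := ddist_of_arc hsc h hta
    omega
  have dat : ddist A a t = 1 := ddist_of_arc hsc hat hta.symm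
  -- t ∈ line A v a via btw t a v, hence t ∈ line A a u : contradiction
  have htmem : t ∈ line A v a := by
    rw [mem_line_iff]
    exact Or.inl (by rw [btw_iff', dta, dva, htv])
  rw [← heq, mem_line_iff] at htmem
  rcases htmem with h | h | h
  · rw [btw_iff'] at h
    have htr := ddist_triangle hsc t v u
    omega
  · rw [btw_iff'] at h; omega
  · rw [btw_iff'] at h
    have ht0 : ddist A t u = 0 := by omega
    exact htu (eq_of_ddist_eq_zero hsc ht0)

lemma key_dav {a u v : V} (hau : A a u) (hva : A v a) (heq : line A a u = line A v a) :
    ddist A a v = 2 :=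
  ddist_eq_two hsc (fun h => hanti a v ⟨h, hva⟩) (Ne.symm (arc_ne hanti hva))
    hau (key hanti hcomp hsc hau hva heq)

/-- Uniqueness of the in-partner: two representing pairs with `A u v'` share `v`. -/
lemma lemL {a u v u' v' : V} (hau : A a u) (hva : A v a) (hau' : A a u') (hv'a : A v' a)
    (h1 : line A a u = line A v a) (h2 : line A a u' = line A v' a)
    (huv' : A u v') : v = v' := by
  by_contra hne
  have hu'v' : A u' v' := key hanti hcomp hsc hau' hv'a h2
  have dav : ddist A a v = 2 := key_dav hanti hcomp hsc hau hva h1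
  have dav' : ddist A a v' = 2 := key_dav hanti hcomp hsc hau' hv'a h2
  have hune : u ≠ v' := by rintro rfl; exact hanti a u ⟨hau, hv'a⟩
  have hu'ne : u' ≠ v' := by rintro rfl; exact hanti a u' ⟨hau', hv'a⟩
  have hu'vne : u' ≠ v := by rintro rfl; exact hanti a u' ⟨hau', hva⟩
  have dau : ddist A a u = 1 := ddist_of_arc hsc hau (arc_ne hanti hau)
  have dau' : ddist A a u' = 1 := ddist_of_arc hsc hau' (arc_ne hanti hau')
  have dva : ddist A v a = 1 := ddist_of_arc hsc hva (arc_ne hanti hva)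
  have dv'a : ddist A v' a = 1 := ddist_of_arc hsc hv'a (arc_ne hanti hv'a)
  have duv' : ddist A u v' = 1 := ddist_of_arc hsc huv' hune
  have du'v' : ddist A u' v' = 1 := ddist_of_arc hsc hu'v' hu'ne
  have hv'ne_v : v' ≠ v := Ne.symm hne
  -- v' ∈ line A a u (since d(a,v') = d(a,u) + d(u,v')), hence v' ∈ line A v a
  have hv'mem : v' ∈ line A v a := by
    rw [← h1, mem_line_iff]
    refine Or.inr (Or.inl ?_)
    rw [btw_iff']
    omega
  rw [mem_line_iff] at hv'mem
  have dvv' : ddist A v v' = 3 := by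
    rcases hv'mem with h | h | h
    · rw [btw_iff'] at h
      exact absurd (eq_of_ddist_eq_zero hsc (by omega)) hv'ne_v
    · rw [btw_iff'] at h; omega
    · rw [btw_iff'] at h
      exact absurd (eq_of_ddist_eq_zero hsc (by omega)) hne
  have hv'v : ddist A v' v = 1 := by
    refine ddist_of_arc hsc ?_ hv'ne_v
    refine (hcomp v' v hv'ne_v).resolve_right fun h => ?_
    rw [ddist_of_arc hsc h hne] at dvv'; omega
  -- v ∉ line A v' a
  have hvnot : v ∉ line A v' a := by
    rw [mem_line_iff]
    rintro (h | h | h)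
    · rw [btw_iff'] at h; omega
    · rw [btw_iff'] at h; omega
    · rw [btw_iff'] at h; omega
  rw [← h2] at hvnot
  -- hence the disjunct btw a u' v fails, so ¬ A u' v, so A v u'
  have hnu'v : ¬ A u' v := fun h => hvnot (by
    rw [mem_line_iff]
    refine Or.inr (Or.inl ?_)
    have hd : ddist A u' v = 1 := ddist_of_arc hsc h hu'vne
    rw [btw_iff']
    omega)
  have hvu' : A v u' := (hcomp v u' (Ne.symm hu'vne)).resolve_right (by tauto)
  -- then d(v,v') ≤ 2, contradiction
  have hle : ddist A v v' ≤ 2 := by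
    have htr := ddist_triangle hsc v u' v'
    rw [ddist_of_arc hsc hvu' (Ne.symm hu'vne), du'v'] at htr
    omega
  omega

end Main

theorem stmt13 {V : Type*} [Fintype V] (A : V → V → Prop)
    (hanti : ∀ u v : V, ¬ (A u v ∧ A v u))
    (hcomp : ∀ u v : V, u ≠ v → A u v ∨ A v u)
    (hsc : StronglyConnected A)
    (a x y : V) (hx : A a x) (hy : A y a) (hrep : line A a x = line A y a) :
    (({S | ∃ z : V, A a z ∧ S = line A a z} ∩
      {S | ∃ z : V, A z a ∧ A x z ∧ S = line A z a} : Set (Set V)).ncard ≤ 1) ∧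
    (({S | ∃ z : V, A z a ∧ S = line A z a} ∩
      {S | ∃ z : V, A a z ∧ A z y ∧ S = line A a z} : Set (Set V)).ncard ≤ 1) := by
  constructor
  · have hsub : ({S | ∃ z : V, A a z ∧ S = line A a z} ∩
        {S | ∃ z : V, A z a ∧ A x z ∧ S = line A z a} : Set (Set V)) ⊆ {line A a x} := by
      rintro S ⟨⟨z₁, hz₁, rfl⟩, ⟨z₂, hz₂a, hxz₂, hS₂⟩⟩
      have h2 : line A a z₁ = line A z₂ a := hS₂
      have hyz : y = z₂ := lemL hanti hcomp hsc hx hy hz₁ hz₂a hrep h2 hxz₂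
      simp only [Set.mem_singleton_iff]
      rw [h2, ← hyz, ← hrep]
    calc _ ≤ ({line A a x} : Set (Set V)).ncard :=
          Set.ncard_le_ncard hsub (Set.finite_singleton _)
      _ = 1 := Set.ncard_singleton _
  · have hsub : ({S | ∃ z : V, A z a ∧ S = line A z a} ∩
        {S | ∃ z : V, A a z ∧ A z y ∧ S = line A a z} : Set (Set V)) ⊆ {line A y a} := by
      rintro S ⟨⟨z₂, hz₂a, rfl⟩, ⟨z₁, hz₁, hz₁y, hS₂⟩⟩
      have h1 : line A a z₁ = line A z₂ a := hS₂.symm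
      have hzy : z₂ = y := lemL hanti hcomp hsc hz₁ hz₂a hx hy h1 hrep hz₁y
      simp only [Set.mem_singleton_iff]
      rw [hzy]
    calc _ ≤ ({line A y a} : Set (Set V)).ncard :=
          Set.ncard_le_ncard hsub (Set.finite_singleton _)
      _ = 1 := Set.ncard_singleton _
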